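/- Let x, y, x', y' ∈ S³₁,₊ and suppose that the de Sitter segments [x,y] and [x',y'] are time-like of the same length, i.e. ⟨x,y⟩ = ⟨x',y'⟩ and ⟨x,y⟩² > 1. Then ‖p₁Φ(x,x') − p₁Φ(y,y')‖ = ‖p₂Φ(x,x') − p₂Φ(y,y')‖: the corresponding Euclidean segments in the two factors have the same length. -/

import Mathlib

noncomputable section

/-- The Minkowski bilinear form on `ℝ⁴`. -/
def mink (x y : Fin 4 → ℝ) : ℝ :=
  -(x 0 * y 0) + x 1 * y 1 + x 2 * y 2 + x 3 * y 3

/-- The projective (Klein) map `p(x) = (x₁, x₂, x₃)/x₀`. -/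
def projMap (x : Fin 4 → ℝ) : EuclideanSpace ℝ (Fin 3) :=
  WithLp.toLp 2 ![x 1 / x 0, x 2 / x 0, x 3 / x 0]

/-- First component `p₁ ∘ Φ` of the Pogorelov map:
`Φ(x,y) = (2(x₁,x₂,x₃)/(x₀+y₀), 2(y₁,y₂,y₃)/(x₀+y₀))`. -/
def phi1 (x y : Fin 4 → ℝ) : EuclideanSpace ℝ (Fin 3) :=
  WithLp.toLp 2 ![2 * x 1 / (x 0 + y 0), 2 * x 2 / (x 0 + y 0), 2 * x 3 / (x 0 + y 0)]

/-- Second component `p₂ ∘ Φ` of the Pogorelov map. -/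
def phi2 (x y : Fin 4 → ℝ) : EuclideanSpace ℝ (Fin 3) :=
  WithLp.toLp 2 ![2 * y 1 / (x 0 + y 0), 2 * y 2 / (x 0 + y 0), 2 * y 3 / (x 0 + y 0)]

/-- If the de Sitter segments `[x,y]` and `[x',y']` are time-like of the same
length, then the corresponding Euclidean segments in the two factors of the
Pogorelov map have the same length. -/
theorem pogorelov_preserves_timelike_lengths (x y x' y' : Fin 4 → ℝ)
    (hx : mink x x = 1) (hx0 : 0 < x 0)
    (hy : mink y y = 1) (hy0 : 0 < y 0)
    (hx' : mink x' x' = 1) (hx'0 : 0 < x' 0)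
    (hy' : mink y' y' = 1) (hy'0 : 0 < y' 0)
    (hlen : mink x y = mink x' y') (htime : 1 < (mink x y) ^ 2) :
    ‖phi1 x x' - phi1 y y'‖ = ‖phi2 x x' - phi2 y y'‖ := by
  have ha : x 0 + x' 0 ≠ 0 := by positivity
  have hb : y 0 + y' 0 ≠ 0 := by positivity
  simp only [mink] at hx hy hx' hy' hlen
  simp only [EuclideanSpace.norm_eq, phi1, phi2]
  congr 1
  have h0 : ∀ (u v : EuclideanSpace ℝ (Fin 3)) (i : Fin 3), (u - v) i = u i - v i :=
    fun u v i => rfl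
  simp only [Fin.sum_univ_three, h0, Matrix.cons_val_zero, Matrix.cons_val_one,
    Matrix.head_cons, Matrix.cons_val_two, Matrix.tail_cons, Real.norm_eq_abs, sq_abs]
  have e1 : (2 * x 1 / (x 0 + x' 0) - 2 * y 1 / (y 0 + y' 0)) ^ 2 +
      (2 * x 2 / (x 0 + x' 0) - 2 * y 2 / (y 0 + y' 0)) ^ 2 +
      (2 * x 3 / (x 0 + x' 0) - 2 * y 3 / (y 0 + y' 0)) ^ 2 =
      (4 * ((y 0 + y' 0) ^ 2 * (x 1 ^ 2 + x 2 ^ 2 + x 3 ^ 2)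
        - 2 * (x 0 + x' 0) * (y 0 + y' 0) * (x 1 * y 1 + x 2 * y 2 + x 3 * y 3)
        + (x 0 + x' 0) ^ 2 * (y 1 ^ 2 + y 2 ^ 2 + y 3 ^ 2)))
        / ((x 0 + x' 0) ^ 2 * (y 0 + y' 0) ^ 2) := by
    field_simp
    ring
  have e2 : (2 * x' 1 / (x 0 + x' 0) - 2 * y' 1 / (y 0 + y' 0)) ^ 2 +
      (2 * x' 2 / (x 0 + x' 0) - 2 * y' 2 / (y 0 + y' 0)) ^ 2 +
      (2 * x' 3 / (x 0 + x' 0) - 2 * y' 3 / (y 0 + y' 0)) ^ 2 =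
      (4 * ((y 0 + y' 0) ^ 2 * (x' 1 ^ 2 + x' 2 ^ 2 + x' 3 ^ 2)
        - 2 * (x 0 + x' 0) * (y 0 + y' 0) * (x' 1 * y' 1 + x' 2 * y' 2 + x' 3 * y' 3)
        + (x 0 + x' 0) ^ 2 * (y' 1 ^ 2 + y' 2 ^ 2 + y' 3 ^ 2)))
        / ((x 0 + x' 0) ^ 2 * (y 0 + y' 0) ^ 2) := by
    field_simp
    ring
  rw [e1, e2]
  congr 1
  linear_combination (4 * (y 0 + y' 0) ^ 2) * hx - (4 * (y 0 + y' 0) ^ 2) * hx'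
    - (8 * (x 0 + x' 0) * (y 0 + y' 0)) * hlen
    + (4 * (x 0 + x' 0) ^ 2) * hy - (4 * (x 0 + x' 0) ^ 2) * hy'
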